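/- Schönhage's asymptotic sum inequality (rectangular version): if a tensor t can be converted by zeroing out variables into a direct sum of r pairwise variable-disjoint terms, each isomorphic to ⟨m,m,m^s⟩ for some real s ≥ κ, then r · m^{ω(κ)} ≤ R̲(t). -/

import Mathlib

open Finset in
/-- A tensor over `F` is given by its coordinate array with respect to fixed
bases of the three spaces. -/
abbrev Tensor (F : Type*) (ι₁ ι₂ ι₃ : Type*) := ι₁ → ι₂ → ι₃ → F

/-- Tensor (Kronecker) product of two tensors. -/
def tmul {F : Type*} [Field F] {ι₁ ι₂ ι₃ κ₁ κ₂ κ₃ : Type*}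
    (t : Tensor F ι₁ ι₂ ι₃) (t' : Tensor F κ₁ κ₂ κ₃) :
    Tensor F (ι₁ × κ₁) (ι₂ × κ₂) (ι₃ × κ₃) :=
  fun a b c => t a.1 b.1 c.1 * t' a.2 b.2 c.2

/-- `t` is a degeneration of `r·⟨1,1,1⟩`: there are `r`-term families of vectors
with entries polynomial in an indeterminate `ε` such that
`∑_l u_l ⊗ v_l ⊗ w_l = ε^h · t + O(ε^{h+1})`. -/
def BorderDecomp {F : Type*} [Field F] {ι₁ ι₂ ι₃ : Type*}
    [Fintype ι₁] [Fintype ι₂] [Fintype ι₃]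
    (t : Tensor F ι₁ ι₂ ι₃) (r : ℕ) : Prop :=
  ∃ (h : ℕ) (u : Fin r → ι₁ → Polynomial F) (v : Fin r → ι₂ → Polynomial F)
    (w : Fin r → ι₃ → Polynomial F), ∀ i j k,
      (∀ m < h, (∑ l, u l i * v l j * w l k).coeff m = 0) ∧
      (∑ l, u l i * v l j * w l k).coeff h = t i j k

/-- The border rank of a tensor. -/
noncomputable def borderRank {F : Type*} [Field F] {ι₁ ι₂ ι₃ : Type*}
    [Fintype ι₁] [Fintype ι₂] [Fintype ι₃] (t : Tensor F ι₁ ι₂ ι₃) : ℕ :=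
  sInf {r | BorderDecomp t r}

/-- Two tensors are isomorphic if one is obtained from the other by invertible
linear changes of basis in each of the three factors. -/
def TIso {F : Type*} [Field F] {ι₁ ι₂ ι₃ κ₁ κ₂ κ₃ : Type*}
    [Fintype ι₁] [Fintype ι₂] [Fintype ι₃] [Fintype κ₁] [Fintype κ₂] [Fintype κ₃]
    [DecidableEq ι₁] [DecidableEq ι₂] [DecidableEq ι₃]
    [DecidableEq κ₁] [DecidableEq κ₂] [DecidableEq κ₃]
    (t : Tensor F ι₁ ι₂ ι₃) (t' : Tensor F κ₁ κ₂ κ₃) : Prop :=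
  ∃ (A : Matrix κ₁ ι₁ F) (A' : Matrix ι₁ κ₁ F) (B : Matrix κ₂ ι₂ F)
    (B' : Matrix ι₂ κ₂ F) (C : Matrix κ₃ ι₃ F) (C' : Matrix ι₃ κ₃ F),
    A * A' = 1 ∧ A' * A = 1 ∧ B * B' = 1 ∧ B' * B = 1 ∧ C * C' = 1 ∧ C' * C = 1 ∧
    ∀ a b c, t' a b c = ∑ i, ∑ j, ∑ k, A a i * B b j * C c k * t i j k

/-- The matrix multiplication tensor `⟨m,n,p⟩ = ∑ x_{rs} ⊗ y_{st} ⊗ z_{rt}`. -/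
def MM (F : Type*) [Field F] (m n p : ℕ) :
    Tensor F (Fin m × Fin n) (Fin n × Fin p) (Fin m × Fin p) :=
  fun a b c => if a.1 = c.1 ∧ a.2 = b.1 ∧ b.2 = c.2 then 1 else 0

/-- The exponent of rectangular matrix multiplication:
`ω(κ) = inf { τ : R̲(⟨n,n,⌈n^κ⌉⟩) = O(n^τ) }`. -/
noncomputable def omegaExp (F : Type*) [Field F] (κ : ℝ) : ℝ :=
  sInf {τ : ℝ | ∃ C : ℝ, ∀ n : ℕ, 1 ≤ n →
    (borderRank (MM F n n (Nat.ceil ((n : ℝ) ^ κ))) : ℝ) ≤ C * (n : ℝ) ^ τ}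

/-!
Border degenerations compose and are compatible with tensor products, and `R̲(t) ≤ s` exactly
when `t` is a degeneration of the unit tensor `⟨s⟩`. Zeroing out variables and applying the block
isomorphisms, `t` degenerates to `⟨r⟩ ⊗ ⟨m,m,p⟩` with `p = ⌈m^κ⌉`, so for `R = R̲(t)` every
tensor power gives `R̲(⟨r^N⟩ ⊗ ⟨m^N,m^N,p^N⟩) ≤ R^N`.

Fix an exponent `τ` with `R̲(⟨n,n,⌈n^κ⌉⟩) = O(n^τ)`. For each `N` there is `a` with
`a^τ ≍ r^N` and `R̲(⟨a,a,⌈a^κ⌉⟩) ≤ r^N`, i.e. `⟨a,a,⌈a^κ⌉⟩` is a degeneration of `⟨r^N⟩`;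
hence `R̲(⟨a m^N, a m^N, ⌈a^κ⌉ p^N⟩) ≤ R^N`. Submultiplicativity gives `n^ω ≤ R̲(⟨n,n,q⟩)`
whenever `q ≥ n^κ`, so `(r^{ω/τ} m^ω)^N = O(R^N)`, i.e. `r^{ω/τ} m^ω ≤ R`. Letting `τ`
decrease to `ω` gives `r m^ω ≤ R`. The flattening lower bound `n² ≤ R̲(⟨n,n,q⟩)` keeps `ω ≥ 2`.
-/

section TensorMap

variable {R : Type*} [CommSemiring R] {ι₁ ι₂ ι₃ κ₁ κ₂ κ₃ : Type*}

def tensorMap [Fintype ι₁] [Fintype ι₂] [Fintype ι₃]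
    (A₁ : Matrix κ₁ ι₁ R) (A₂ : Matrix κ₂ ι₂ R) (A₃ : Matrix κ₃ ι₃ R)
    (t : Tensor R ι₁ ι₂ ι₃) : Tensor R κ₁ κ₂ κ₃ :=
  fun a b c => ∑ i, ∑ j, ∑ k, A₁ a i * A₂ b j * A₃ c k * t i j k

def unitTensor (R : Type*) [Zero R] [One R] (r : ℕ) : Tensor R (Fin r) (Fin r) (Fin r) :=
  fun i j k => if i = j ∧ j = k then 1 else 0

variable [Fintype ι₁] [Fintype ι₂] [Fintype ι₃]

theorem tensorMap_tensorMap {μ₁ μ₂ μ₃ : Type*} [Fintype κ₁] [Fintype κ₂] [Fintype κ₃]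
    (B₁ : Matrix μ₁ κ₁ R) (B₂ : Matrix μ₂ κ₂ R) (B₃ : Matrix μ₃ κ₃ R)
    (A₁ : Matrix κ₁ ι₁ R) (A₂ : Matrix κ₂ ι₂ R) (A₃ : Matrix κ₃ ι₃ R)
    (t : Tensor R ι₁ ι₂ ι₃) :
    tensorMap B₁ B₂ B₃ (tensorMap A₁ A₂ A₃ t) = tensorMap (B₁ * A₁) (B₂ * A₂) (B₃ * A₃) t := by
  ext a b c
  simp only [tensorMap, Matrix.mul_apply, Finset.mul_sum, Finset.sum_mul]
  -- bring both sides to the summation order `i, j, k, a', b', c'`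
  simp only [Finset.sum_comm (t := (Finset.univ : Finset κ₃))]
  simp only [Finset.sum_comm (t := (Finset.univ : Finset κ₂))]
  simp only [Finset.sum_comm (t := (Finset.univ : Finset κ₁))]
  simp only [Finset.sum_comm (t := (Finset.univ : Finset ι₃))]
  simp only [Finset.sum_comm (t := (Finset.univ : Finset ι₂))]
  simp only [Finset.sum_comm (t := (Finset.univ : Finset ι₁))]
  congr! 6 with i j k a' b' c'
  ring

theorem tensorMap_mul_add_mul (A₁ : Matrix κ₁ ι₁ R) (A₂ : Matrix κ₂ ι₂ R) (A₃ : Matrix κ₃ ι₃ R)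
    (p q : R) (t s : Tensor R ι₁ ι₂ ι₃) (a : κ₁) (b : κ₂) (c : κ₃) :
    tensorMap A₁ A₂ A₃ (fun i j k => p * t i j k + q * s i j k) a b c =
      p * tensorMap A₁ A₂ A₃ t a b c + q * tensorMap A₁ A₂ A₃ s a b c := by
  simp only [tensorMap, mul_add, Finset.sum_add_distrib, Finset.mul_sum]
  congr 1 <;> refine Finset.sum_congr rfl fun i _ => Finset.sum_congr rfl fun j _ =>
    Finset.sum_congr rfl fun k _ => by ring

theorem tensorMap_kronecker {μ₁ μ₂ μ₃ ν₁ ν₂ ν₃ : Type*} [Fintype μ₁] [Fintype μ₂] [Fintype μ₃]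
    (A₁ : Matrix κ₁ ι₁ R) (A₂ : Matrix κ₂ ι₂ R) (A₃ : Matrix κ₃ ι₃ R)
    (B₁ : Matrix ν₁ μ₁ R) (B₂ : Matrix ν₂ μ₂ R) (B₃ : Matrix ν₃ μ₃ R)
    (t : Tensor R ι₁ ι₂ ι₃) (s : Tensor R μ₁ μ₂ μ₃) (a : κ₁ × ν₁) (b : κ₂ × ν₂) (c : κ₃ × ν₃) :
    tensorMap (Matrix.kronecker A₁ B₁) (Matrix.kronecker A₂ B₂) (Matrix.kronecker A₃ B₃)
        (fun i j k => t i.1 j.1 k.1 * s i.2 j.2 k.2) a b c =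
      tensorMap A₁ A₂ A₃ t a.1 b.1 c.1 * tensorMap B₁ B₂ B₃ s a.2 b.2 c.2 := by
  simp only [tensorMap, Fintype.sum_prod_type, Finset.sum_mul_sum]
  congr! 6
  simp only [Matrix.kronecker, Matrix.kroneckerMap_apply]
  ring

theorem tensorMap_submatrix_one [DecidableEq ι₁] [DecidableEq ι₂] [DecidableEq ι₃]
    (e₁ : κ₁ → ι₁) (e₂ : κ₂ → ι₂) (e₃ : κ₃ → ι₃) (t : Tensor R ι₁ ι₂ ι₃) :
    tensorMap ((1 : Matrix ι₁ ι₁ R).submatrix e₁ id) ((1 : Matrix ι₂ ι₂ R).submatrix e₂ id)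
      ((1 : Matrix ι₃ ι₃ R).submatrix e₃ id) t = fun a b c => t (e₁ a) (e₂ b) (e₃ c) := by
  ext a b c
  simp [tensorMap, Matrix.one_apply, ite_mul]

theorem map_tensorMap {S G : Type*} [CommSemiring S] [FunLike G R S] [RingHomClass G R S] (φ : G)
    (A₁ : Matrix κ₁ ι₁ R) (A₂ : Matrix κ₂ ι₂ R) (A₃ : Matrix κ₃ ι₃ R)
    (t : Tensor R ι₁ ι₂ ι₃) (a : κ₁) (b : κ₂) (c : κ₃) :
    φ (tensorMap A₁ A₂ A₃ t a b c) =
      tensorMap (A₁.map φ) (A₂.map φ) (A₃.map φ) (fun i j k => φ (t i j k)) a b c := by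
  simp [tensorMap, map_sum, map_mul]

theorem tensorMap_unitTensor {r : ℕ} (A₁ : Matrix κ₁ (Fin r) R) (A₂ : Matrix κ₂ (Fin r) R)
    (A₃ : Matrix κ₃ (Fin r) R) (a : κ₁) (b : κ₂) (c : κ₃) :
    tensorMap A₁ A₂ A₃ (unitTensor R r) a b c = ∑ l, A₁ a l * A₂ b l * A₃ c l := by
  simp [tensorMap, unitTensor, ite_and, Finset.sum_ite_eq]

end TensorMap

section Approx

open Polynomial

variable {R : Type*} [CommRing R]

def Approx (f : R[X]) (h : ℕ) (c : R) : Prop :=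
  ∃ g : R[X], f = C c * X ^ h + X ^ (h + 1) * g

theorem approx_iff_coeff {f : R[X]} {h : ℕ} {c : R} :
    Approx f h c ↔ (∀ m < h, f.coeff m = 0) ∧ f.coeff h = c := by
  have : Approx f h c ↔ X ^ (h + 1) ∣ f - C c * X ^ h :=
    ⟨fun ⟨g, hg⟩ => ⟨g, by rw [hg]; ring⟩, fun ⟨g, hg⟩ => ⟨g, by linear_combination hg⟩⟩
  rw [this, X_pow_dvd_iff, Nat.forall_lt_succ_right]
  refine and_congr (forall₂_congr fun m hm => ?_) ?_
  · simp [hm.ne]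
  · simp [sub_eq_zero]

theorem approx_C (c : R) : Approx (C c) 0 c := ⟨0, by simp⟩

theorem Approx.mul {f f' : R[X]} {h h' : ℕ} {c c' : R}
    (hf : Approx f h c) (hf' : Approx f' h' c') : Approx (f * f') (h + h') (c * c') := by
  obtain ⟨g, rfl⟩ := hf
  obtain ⟨g', rfl⟩ := hf'
  exact ⟨C c * g' + C c' * g + X * g * g', by rw [C_mul]; ring⟩

theorem Approx.X_pow_mul_add {f : R[X]} {h : ℕ} {c : R} (hf : Approx f h c) (k : ℕ) (q : R[X]) :
    Approx (X ^ k * f + X ^ (k + h + 1) * q) (k + h) c := by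
  obtain ⟨g, rfl⟩ := hf
  exact ⟨g + q, by ring⟩

theorem Approx.exists_expand_eq {f : R[X]} {h : ℕ} {c : R} (hf : Approx f h c) (M : ℕ) :
    ∃ q : R[X], Polynomial.expand R M f = X ^ (M * h) * C c + X ^ (M * h + M) * q := by
  obtain ⟨g, rfl⟩ := hf
  refine ⟨Polynomial.expand R M g, ?_⟩
  simp only [map_add, map_mul, map_pow, expand_C, expand_X]
  ring

theorem det_ne_zero_of_approx_one [IsDomain R] {ι : Type*} [Fintype ι] [DecidableEq ι]
    {M : Matrix ι ι R[X]} {h : ℕ}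
    (hM : ∀ i i', Approx (M i i') h (if i = i' then 1 else 0)) : M.det ≠ 0 := by
  choose g hg using hM
  have hM : M = (X ^ h : R[X]) • (1 + (X : R[X]) • Matrix.of g : Matrix ι ι R[X]) := by
    refine Matrix.ext fun i i' => ?_
    rw [hg]
    simp only [Matrix.smul_apply, Matrix.add_apply, Matrix.one_apply, Matrix.of_apply,
      smul_eq_mul, apply_ite C, map_one, map_zero]
    ring
  have hunit : (1 + (X : R[X]) • Matrix.of g).det ≠ 0 := fun h0 => by
    have hX : (evalRingHom (0 : R)).mapMatrix ((X : R[X]) • Matrix.of g) = 0 := by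
      ext; simp
    have h1 := congrArg (evalRingHom (0 : R)) h0
    rw [RingHom.map_det, map_add, map_one, hX, add_zero, Matrix.det_one, map_zero] at h1
    exact one_ne_zero h1
  rw [hM, Matrix.det_smul]
  exact mul_ne_zero (pow_ne_zero _ (pow_ne_zero _ X_ne_zero)) hunit

end Approx

section Degeneration

open Polynomial

variable {F : Type*} [Field F] {ι₁ ι₂ ι₃ κ₁ κ₂ κ₃ μ₁ μ₂ μ₃ : Type*}
  [Fintype ι₁] [Fintype ι₂] [Fintype ι₃]

def DegeneratesTo (t : Tensor F ι₁ ι₂ ι₃) (t' : Tensor F κ₁ κ₂ κ₃) : Prop :=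
  ∃ (g : ℕ) (A₁ : Matrix κ₁ ι₁ F[X]) (A₂ : Matrix κ₂ ι₂ F[X]) (A₃ : Matrix κ₃ ι₃ F[X]),
    ∀ a b c, Approx (tensorMap A₁ A₂ A₃ (fun i j k => C (t i j k)) a b c) g (t' a b c)

theorem degeneratesTo_tensorMap (t : Tensor F ι₁ ι₂ ι₃)
    (A₁ : Matrix κ₁ ι₁ F) (A₂ : Matrix κ₂ ι₂ F) (A₃ : Matrix κ₃ ι₃ F) :
    DegeneratesTo t (tensorMap A₁ A₂ A₃ t) :=
  ⟨0, A₁.map C, A₂.map C, A₃.map C, fun a b c => by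
    rw [← map_tensorMap]; exact approx_C _⟩

section Restriction

variable [DecidableEq ι₁] [DecidableEq ι₂] [DecidableEq ι₃]
  {t : Tensor F ι₁ ι₂ ι₃} {t' : Tensor F κ₁ κ₂ κ₃}

theorem degeneratesTo_of_eq_comp (e₁ : κ₁ → ι₁) (e₂ : κ₂ → ι₂) (e₃ : κ₃ → ι₃)
    (h : ∀ a b c, t' a b c = t (e₁ a) (e₂ b) (e₃ c)) : DegeneratesTo t t' := by
  have : t' = tensorMap ((1 : Matrix ι₁ ι₁ F).submatrix e₁ id)
      ((1 : Matrix ι₂ ι₂ F).submatrix e₂ id) ((1 : Matrix ι₃ ι₃ F).submatrix e₃ id) t := by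
    rw [tensorMap_submatrix_one]; exact funext₃ h
  exact this ▸ degeneratesTo_tensorMap t _ _ _

theorem degeneratesTo_of_equiv (e₁ : κ₁ ≃ ι₁) (e₂ : κ₂ ≃ ι₂) (e₃ : κ₃ ≃ ι₃)
    (h : ∀ i j k, t i j k = t' (e₁.symm i) (e₂.symm j) (e₃.symm k)) : DegeneratesTo t t' :=
  degeneratesTo_of_eq_comp e₁ e₂ e₃ fun a b c => by simp [h]

theorem DegeneratesTo.refl (t : Tensor F ι₁ ι₂ ι₃) : DegeneratesTo t t :=
  degeneratesTo_of_eq_comp id id id fun _ _ _ => rfl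

end Restriction

theorem DegeneratesTo.trans [Fintype κ₁] [Fintype κ₂] [Fintype κ₃]
    {t : Tensor F ι₁ ι₂ ι₃} {t' : Tensor F κ₁ κ₂ κ₃} {t'' : Tensor F μ₁ μ₂ μ₃}
    (h : DegeneratesTo t t') (h' : DegeneratesTo t' t'') : DegeneratesTo t t'' := by
  obtain ⟨g, A₁, A₂, A₃, hA⟩ := h
  obtain ⟨g', B₁, B₂, B₃, hB⟩ := h'
  -- substituting `X ↦ X ^ (g' + 1)` in the first degeneration pushes its error terms
  -- past the order `g'` of the second one
  set e := expand F (g' + 1)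
  choose q hq using fun a b c => (hA a b c).exists_expand_eq (g' + 1)
  refine ⟨(g' + 1) * g + g', B₁ * A₁.map e, B₂ * A₂.map e, B₃ * A₃.map e, fun a b c => ?_⟩
  have hinner : tensorMap (A₁.map e) (A₂.map e) (A₃.map e) (fun i j k => C (t i j k)) =
      fun a' b' c' => X ^ ((g' + 1) * g) * C (t' a' b' c') + X ^ ((g' + 1) * g + (g' + 1)) *
        q a' b' c' := by
    funext a' b' c'
    rw [← hq, map_tensorMap]
    simp only [e, expand_C]
  rw [← tensorMap_tensorMap, hinner, tensorMap_mul_add_mul]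
  exact (hB a b c).X_pow_mul_add _ _

theorem DegeneratesTo.tmul {ν₁ ν₂ ν₃ : Type*} [Fintype μ₁] [Fintype μ₂] [Fintype μ₃]
    {t : Tensor F ι₁ ι₂ ι₃} {t' : Tensor F κ₁ κ₂ κ₃}
    {s : Tensor F μ₁ μ₂ μ₃} {s' : Tensor F ν₁ ν₂ ν₃}
    (ht : DegeneratesTo t t') (hs : DegeneratesTo s s') :
    DegeneratesTo (tmul t s) (tmul t' s') := by
  obtain ⟨g, A₁, A₂, A₃, hA⟩ := ht
  obtain ⟨g', B₁, B₂, B₃, hB⟩ := hs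
  refine ⟨g + g', A₁.kronecker B₁, A₂.kronecker B₂, A₃.kronecker B₃, fun a b c => ?_⟩
  simp only [_root_.tmul, C_mul]
  rw [tensorMap_kronecker _ _ _ _ _ _ (fun i j k => C (t i j k)) (fun i j k => C (s i j k))]
  exact (hA _ _ _).mul (hB _ _ _)

theorem borderDecomp_iff_degeneratesTo {t : Tensor F ι₁ ι₂ ι₃} {r : ℕ} :
    BorderDecomp t r ↔ DegeneratesTo (unitTensor F r) t := by
  have hC : (fun i j k => C (unitTensor F r i j k)) = unitTensor F[X] r := by
    funext i j k; simp [unitTensor, apply_ite C]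
  simp only [BorderDecomp, DegeneratesTo, hC, tensorMap_unitTensor, ← approx_iff_coeff]
  constructor
  · rintro ⟨h, u, v, w, H⟩
    exact ⟨h, fun a l => u l a, fun b l => v l b, fun c l => w l c, H⟩
  · rintro ⟨h, A₁, A₂, A₃, H⟩
    exact ⟨h, fun l a => A₁ a l, fun l b => A₂ b l, fun l c => A₃ c l, H⟩

end Degeneration

section BorderRank

open Polynomial

variable {F : Type*} [Field F] {ι₁ ι₂ ι₃ κ₁ κ₂ κ₃ : Type*}
  [Fintype ι₁] [Fintype ι₂] [Fintype ι₃] [Fintype κ₁] [Fintype κ₂] [Fintype κ₃]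

theorem borderDecomp_card_prod (t : Tensor F ι₁ ι₂ ι₃) :
    BorderDecomp t (Fintype.card (ι₁ × ι₂)) := by
  classical
  set e := (Fintype.equivFin (ι₁ × ι₂)).symm
  simp only [BorderDecomp, ← approx_iff_coeff]
  refine ⟨0, fun l i => if (e l).1 = i then 1 else 0, fun l j => if (e l).2 = j then 1 else 0,
    fun l k => C (t (e l).1 (e l).2 k), fun i j k => ?_⟩
  convert approx_C (t i j k)
  simp only
  rw [e.sum_comp (fun p => (if p.1 = i then (1 : F[X]) else 0) * (if p.2 = j then 1 else 0) *
    C (t p.1 p.2 k))]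
  simp [Fintype.sum_prod_type, ite_mul]

theorem borderDecomp_borderRank (t : Tensor F ι₁ ι₂ ι₃) : BorderDecomp t (borderRank t) :=
  Nat.sInf_mem (s := {r | BorderDecomp t r}) ⟨_, borderDecomp_card_prod t⟩

theorem borderRank_le {t : Tensor F ι₁ ι₂ ι₃} {r : ℕ} (h : BorderDecomp t r) :
    borderRank t ≤ r :=
  Nat.sInf_le h

theorem DegeneratesTo.borderDecomp {t : Tensor F ι₁ ι₂ ι₃} {t' : Tensor F κ₁ κ₂ κ₃} {r : ℕ}
    (h : DegeneratesTo t t') (ht : BorderDecomp t r) : BorderDecomp t' r :=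
  borderDecomp_iff_degeneratesTo.2 ((borderDecomp_iff_degeneratesTo.1 ht).trans h)

theorem DegeneratesTo.borderRank_le {t : Tensor F ι₁ ι₂ ι₃} {t' : Tensor F κ₁ κ₂ κ₃}
    (h : DegeneratesTo t t') : borderRank t' ≤ borderRank t :=
  _root_.borderRank_le (h.borderDecomp (borderDecomp_borderRank t))

theorem BorderDecomp.mono {t : Tensor F ι₁ ι₂ ι₃} {r r' : ℕ} (ht : BorderDecomp t r)
    (hr : r ≤ r') : BorderDecomp t r' := by
  rw [borderDecomp_iff_degeneratesTo] at ht ⊢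
  refine (degeneratesTo_of_eq_comp (Fin.castLE hr) (Fin.castLE hr) (Fin.castLE hr)
    fun _ _ _ => ?_).trans ht
  simp [unitTensor, Fin.castLE_inj]

end BorderRank

section MatrixMultiplication

variable {F : Type*} [Field F]

theorem degeneratesTo_unitTensor_mul (s s' : ℕ) :
    DegeneratesTo (unitTensor F (s * s')) (tmul (unitTensor F s) (unitTensor F s')) :=
  degeneratesTo_of_eq_comp finProdFinEquiv finProdFinEquiv finProdFinEquiv fun a b c => by
    simp only [tmul, unitTensor, ite_zero_mul_ite_zero, mul_one]
    simp [Prod.ext_iff]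
    split_ifs <;> tauto

theorem degeneratesTo_tmul_unitTensor (s s' : ℕ) :
    DegeneratesTo (tmul (unitTensor F s) (unitTensor F s')) (unitTensor F (s * s')) :=
  degeneratesTo_of_equiv finProdFinEquiv.symm finProdFinEquiv.symm finProdFinEquiv.symm
    fun a b c => by
    simp only [tmul, unitTensor, ite_zero_mul_ite_zero, mul_one]
    simp [Prod.ext_iff]
    split_ifs <;> tauto

theorem degeneratesTo_tmul_MM (a b c a' b' c' : ℕ) :
    DegeneratesTo (tmul (MM F a b c) (MM F a' b' c')) (MM F (a * a') (b * b') (c * c')) := by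
  let e {m n m' n' : ℕ} : Fin (m * m') × Fin (n * n') ≃ (Fin m × Fin n) × (Fin m' × Fin n') :=
    (finProdFinEquiv.symm.prodCongr finProdFinEquiv.symm).trans (Equiv.prodProdProdComm _ _ _ _)
  refine degeneratesTo_of_equiv e e e fun x y z => ?_
  simp only [tmul, MM, ite_zero_mul_ite_zero, mul_one]
  simp [e, Prod.ext_iff]
  split_ifs <;> tauto

theorem degeneratesTo_tmul_tmul_comm {ι₁ ι₂ ι₃ κ₁ κ₂ κ₃ μ₁ μ₂ μ₃ ν₁ ν₂ ν₃ : Type*}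
    [Fintype ι₁] [Fintype ι₂] [Fintype ι₃] [Fintype κ₁] [Fintype κ₂] [Fintype κ₃]
    [Fintype μ₁] [Fintype μ₂] [Fintype μ₃] [Fintype ν₁] [Fintype ν₂] [Fintype ν₃]
    [DecidableEq ι₁] [DecidableEq ι₂] [DecidableEq ι₃] [DecidableEq κ₁] [DecidableEq κ₂]
    [DecidableEq κ₃] [DecidableEq μ₁] [DecidableEq μ₂] [DecidableEq μ₃] [DecidableEq ν₁]
    [DecidableEq ν₂] [DecidableEq ν₃]
    (t : Tensor F ι₁ ι₂ ι₃) (t' : Tensor F κ₁ κ₂ κ₃) (s : Tensor F μ₁ μ₂ μ₃)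
    (s' : Tensor F ν₁ ν₂ ν₃) :
    DegeneratesTo (tmul (tmul t t') (tmul s s')) (tmul (tmul t s) (tmul t' s')) :=
  degeneratesTo_of_eq_comp (Equiv.prodProdProdComm _ _ _ _) (Equiv.prodProdProdComm _ _ _ _)
    (Equiv.prodProdProdComm _ _ _ _) fun _ _ _ => by
      simp only [tmul, Equiv.prodProdProdComm_apply]
      ring

theorem DegeneratesTo.pow_unitTensor_tmul_MM {R r m n p : ℕ}
    (h : DegeneratesTo (unitTensor F R) (_root_.tmul (unitTensor F r) (MM F m n p))) (N : ℕ) :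
    DegeneratesTo (unitTensor F (R ^ N))
      (_root_.tmul (unitTensor F (r ^ N)) (MM F (m ^ N) (n ^ N) (p ^ N))) := by
  induction N with
  | zero =>
    rw [pow_zero, pow_zero, pow_zero, pow_zero, pow_zero]
    exact degeneratesTo_of_eq_comp (fun _ => 0) (fun _ => 0) (fun _ => 0) fun _ _ _ => by
      simp [_root_.tmul, unitTensor, MM, Subsingleton.elim _ (0 : Fin 1)]
  | succ N ih =>
    exact (degeneratesTo_unitTensor_mul _ _).trans <| (ih.tmul h).trans <|
      (degeneratesTo_tmul_tmul_comm _ _ _ _).trans <|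
      (degeneratesTo_tmul_unitTensor _ _).tmul (degeneratesTo_tmul_MM _ _ _ _ _ _)

theorem degeneratesTo_MM_of_le {m n p m' n' p' : ℕ} (hm : m ≤ m') (hn : n ≤ n') (hp : p ≤ p') :
    DegeneratesTo (MM F m' n' p') (MM F m n p) :=
  degeneratesTo_of_eq_comp (Prod.map (Fin.castLE hm) (Fin.castLE hn))
    (Prod.map (Fin.castLE hn) (Fin.castLE hp)) (Prod.map (Fin.castLE hm) (Fin.castLE hp))
    fun _ _ _ => by simp [MM, Fin.castLE_inj]

theorem borderRank_MM_mono {m n p m' n' p' : ℕ} (hm : m ≤ m') (hn : n ≤ n') (hp : p ≤ p') :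
    borderRank (MM F m n p) ≤ borderRank (MM F m' n' p') :=
  (degeneratesTo_MM_of_le hm hn hp).borderRank_le

theorem borderDecomp_MM_mul_pow {R r m n p a b c N : ℕ}
    (h : BorderDecomp (tmul (unitTensor F r) (MM F m n p)) R)
    (habc : BorderDecomp (MM F a b c) (r ^ N)) :
    BorderDecomp (MM F (a * m ^ N) (b * n ^ N) (c * p ^ N)) (R ^ N) := by
  rw [borderDecomp_iff_degeneratesTo] at *
  exact (h.pow_unitTensor_tmul_MM N).trans <| (habc.tmul (.refl _)).trans (degeneratesTo_tmul_MM ..)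

theorem borderRank_MM_pow_le (m n p N : ℕ) :
    borderRank (MM F (m ^ N) (n ^ N) (p ^ N)) ≤ borderRank (MM F m n p) ^ N := by
  have h : BorderDecomp (tmul (unitTensor F 1) (MM F m n p)) (borderRank (MM F m n p)) :=
    (degeneratesTo_of_eq_comp Prod.snd Prod.snd Prod.snd fun _ _ _ => by
      simp [tmul, unitTensor, Subsingleton.elim _ (0 : Fin 1)]).borderDecomp
      (borderDecomp_borderRank _)
  have h₁ : BorderDecomp (MM F 1 1 1) (1 ^ N) := by
    simpa using borderDecomp_card_prod (MM F 1 1 1)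
  have := borderRank_le (borderDecomp_MM_mul_pow h h₁)
  rwa [one_mul, one_mul, one_mul] at this

end MatrixMultiplication

section LowerBound

open Polynomial

variable {F : Type*} [Field F] {ι₁ ι₂ ι₃ : Type*} [Fintype ι₁] [Fintype ι₂] [Fintype ι₃]

theorem card_le_of_borderDecomp [DecidableEq ι₁] {t : Tensor F ι₁ ι₂ ι₃} {r : ℕ}
    (hb : BorderDecomp t r) (e₂ : ι₁ → ι₂) (e₃ : ι₁ → ι₃)
    (he : ∀ i i', t i (e₂ i') (e₃ i') = if i = i' then 1 else 0) : Fintype.card ι₁ ≤ r := by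
  simp only [BorderDecomp, ← approx_iff_coeff] at hb
  obtain ⟨h, u, v, w, hu⟩ := hb
  let U : Matrix ι₁ (Fin r) F[X] := Matrix.of fun i l => u l i
  let V : Matrix (Fin r) ι₁ F[X] := Matrix.of fun l i' => v l (e₂ i') * w l (e₃ i')
  have hUV : ∀ i i', Approx ((U * V) i i') h (if i = i' then 1 else 0) := fun i i' => by
    simpa [← he, U, V, Matrix.mul_apply, mul_assoc] using hu i (e₂ i') (e₃ i')
  calc Fintype.card ι₁ = (U * V).rank :=
        (Matrix.rank_of_det_ne_zero (det_ne_zero_of_approx_one hUV)).symm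
    _ ≤ U.rank := Matrix.rank_mul_le_left _ _
    _ ≤ r := (Matrix.rank_le_card_width U).trans_eq (Fintype.card_fin r)

theorem sq_le_borderRank_MM {n p : ℕ} (hp : 1 ≤ p) : n * n ≤ borderRank (MM F n n p) := by
  have := card_le_of_borderDecomp (borderDecomp_borderRank (MM F n n p))
    (fun i => (i.2, ⟨0, hp⟩)) (fun i => (i.1, ⟨0, hp⟩)) fun i i' => by
      simp [MM, Prod.ext_iff, and_comm]
  simpa using this

end LowerBound

theorem Finset.sum_dite_mem_univ {α M : Type*} [Fintype α] [DecidableEq α] [AddCommMonoid M]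
    (s : Finset α) (f : (a : α) → a ∈ s → M) :
    ∑ a, (if h : a ∈ s then f a h else 0) = ∑ a : s, f a a.2 := by
  rw [← Finset.sum_subset s.subset_univ (fun a _ ha => dif_neg ha), ← Finset.sum_coe_sort]
  exact Finset.sum_congr rfl fun a _ => dif_pos a.2

section Blocks

variable {F : Type*} [Field F] {ι₁ ι₂ ι₃ : Type*} [Fintype ι₁] [Fintype ι₂] [Fintype ι₃]
  [DecidableEq ι₁] [DecidableEq ι₂] [DecidableEq ι₃]

theorem degeneratesTo_tmul_MM_of_blocks (t : Tensor F ι₁ ι₂ ι₃) {r m p : ℕ}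
    (Sx : Fin r → Finset ι₁) (Sy : Fin r → Finset ι₂) (Sz : Fin r → Finset ι₃)
    (hcross : ∀ l l' l'' : Fin r, ¬(l = l' ∧ l' = l'') →
      ∀ i ∈ Sx l, ∀ j ∈ Sy l', ∀ k ∈ Sz l'', t i j k = 0)
    {P : Fin r → ℕ} (hiso : ∀ l, TIso (fun (i : ↥(Sx l)) (j : ↥(Sy l)) (k : ↥(Sz l)) =>
      t (i : ι₁) (j : ι₂) (k : ι₃)) (MM F m m (P l)))
    (hp : ∀ l, p ≤ P l) :
    DegeneratesTo t (tmul (unitTensor F r) (MM F m m p)) := by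
  choose A _ B _ C _ hABC using hiso
  let A₁ : Matrix (Fin r × (Fin m × Fin m)) ι₁ F := fun a i =>
    if hi : i ∈ Sx a.1 then A a.1 a.2 ⟨i, hi⟩ else 0
  let A₂ : Matrix (Fin r × (Fin m × Fin p)) ι₂ F := fun b j =>
    if hj : j ∈ Sy b.1 then B b.1 (b.2.1, Fin.castLE (hp b.1) b.2.2) ⟨j, hj⟩ else 0
  let A₃ : Matrix (Fin r × (Fin m × Fin p)) ι₃ F := fun c k =>
    if hk : k ∈ Sz c.1 then C c.1 (c.2.1, Fin.castLE (hp c.1) c.2.2) ⟨k, hk⟩ else 0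
  convert degeneratesTo_tensorMap t A₁ A₂ A₃
  funext ⟨l, a⟩ ⟨l', b⟩ ⟨l'', c⟩
  simp only [tensorMap, A₁, A₂, A₃, dite_mul, mul_dite, zero_mul, mul_zero,
    Finset.sum_dite_irrel, Finset.sum_const_zero, Finset.sum_dite_mem_univ, Subtype.coe_eta]
  by_cases hl : l = l' ∧ l' = l''
  · obtain ⟨rfl, rfl⟩ := hl
    rw [← (hABC l).2.2.2.2.2.2]
    simp [tmul, unitTensor, MM, Fin.castLE_inj]
  · simp only [tmul, unitTensor, if_neg hl, zero_mul]
    exact (Finset.sum_eq_zero fun i _ => Finset.sum_eq_zero fun j _ => Finset.sum_eq_zero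
      fun k _ => by rw [hcross l l' l'' hl i i.2 j j.2 k k.2, mul_zero]).symm

end Blocks

theorem le_of_forall_pow_le_mul_pow {x y K : ℝ} (hy : 0 ≤ y)
    (h : ∀ N : ℕ, x ^ N ≤ K * y ^ N) : x ≤ y := by
  by_contra! hxy
  rcases hy.eq_or_lt with rfl | hy
  · have h1 := h 1
    rw [pow_one, pow_one, mul_zero] at h1
    linarith
  obtain ⟨N, hN⟩ := ((tendsto_pow_atTop_atTop_of_one_lt
    ((one_lt_div hy).2 hxy)).eventually_gt_atTop K).exists
  rw [div_pow, lt_div_iff₀ (pow_pos hy N)] at hN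
  exact (h N).not_gt hN

section Exponent

open Real Filter Topology

variable {F : Type*} [Field F] {κ : ℝ}

def admissibleExponents (F : Type*) [Field F] (κ : ℝ) : Set ℝ :=
  {τ : ℝ | ∃ C : ℝ, ∀ n : ℕ, 1 ≤ n →
    (borderRank (MM F n n (Nat.ceil ((n : ℝ) ^ κ))) : ℝ) ≤ C * (n : ℝ) ^ τ}

theorem three_add_mem_admissibleExponents (hκ : 0 ≤ κ) : 3 + κ ∈ admissibleExponents F κ := by
  refine ⟨2, fun n hn => ?_⟩
  have hn' : (1 : ℝ) ≤ n := by exact_mod_cast hn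
  have hceil : (⌈(n : ℝ) ^ κ⌉₊ : ℝ) ≤ 2 * (n : ℝ) ^ κ := by
    linarith [Nat.ceil_lt_add_one (rpow_nonneg (Nat.cast_nonneg n) κ), one_le_rpow hn' hκ]
  have hcard := borderRank_le (borderDecomp_card_prod (MM F n n ⌈(n : ℝ) ^ κ⌉₊))
  simp only [Fintype.card_prod, Fintype.card_fin] at hcard
  calc (borderRank (MM F n n ⌈(n : ℝ) ^ κ⌉₊) : ℝ) ≤ n * n * (n * ⌈(n : ℝ) ^ κ⌉₊) := by
        exact_mod_cast hcard
    _ ≤ n * n * (n * (2 * (n : ℝ) ^ κ)) := by gcongr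
    _ = 2 * (n : ℝ) ^ (3 + κ) := by
        rw [rpow_add (by positivity), rpow_ofNat]; ring

theorem two_le_of_mem_admissibleExponents {τ : ℝ} (hτ : τ ∈ admissibleExponents F κ) :
    2 ≤ τ := by
  obtain ⟨C, hC⟩ := hτ
  by_contra! hτ2
  have hlim : Tendsto (fun n : ℕ => (n : ℝ) ^ (2 - τ)) atTop atTop :=
    (tendsto_rpow_atTop (by linarith)).comp tendsto_natCast_atTop_atTop
  obtain ⟨n, hCn, hn⟩ := ((hlim.eventually_gt_atTop C).and (eventually_ge_atTop 1)).exists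
  have hn' : (0 : ℝ) < n := by exact_mod_cast hn
  have hsq : ((n * n : ℕ) : ℝ) ≤ borderRank (MM F n n ⌈(n : ℝ) ^ κ⌉₊) :=
    by exact_mod_cast sq_le_borderRank_MM (Nat.one_le_iff_ne_zero.2 (Nat.ceil_pos.2
      (rpow_pos_of_pos hn' κ)).ne')
  have hsplit : (n : ℝ) ^ (2 - τ) * (n : ℝ) ^ τ = n * n := by
    rw [← rpow_add hn', sub_add_cancel, rpow_two, sq]
  have := (hsq.trans (hC n hn)).trans_lt
    (mul_lt_mul_of_pos_right hCn (rpow_pos_of_pos hn' τ))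
  push_cast at this
  linarith

theorem bddBelow_admissibleExponents : BddBelow (admissibleExponents F κ) :=
  ⟨2, fun _ => two_le_of_mem_admissibleExponents⟩

theorem two_le_omegaExp (hκ : 0 ≤ κ) : 2 ≤ omegaExp F κ :=
  le_csInf ⟨_, three_add_mem_admissibleExponents hκ⟩ fun _ => two_le_of_mem_admissibleExponents

theorem one_le_borderRank_MM (hκ : 0 ≤ κ) {n p : ℕ} (hn : 1 ≤ n) (hp : (n : ℝ) ^ κ ≤ p) :
    1 ≤ borderRank (MM F n n p) := by
  have hp1 : 1 ≤ p := by exact_mod_cast (one_le_rpow (by exact_mod_cast hn) hκ).trans hp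
  exact (Nat.one_le_iff_ne_zero.2 (by positivity)).trans (sq_le_borderRank_MM hp1)

theorem logb_mem_admissibleExponents (hκ : 0 ≤ κ) {n p : ℕ} (hn : 2 ≤ n)
    (hp : (n : ℝ) ^ κ ≤ p) :
    logb n (borderRank (MM F n n p)) ∈ admissibleExponents F κ := by
  set R := borderRank (MM F n n p)
  have hn1 : (1 : ℝ) < n := by exact_mod_cast hn
  have hR : (1 : ℝ) ≤ R := by exact_mod_cast one_le_borderRank_MM hκ (by omega) hp
  refine ⟨R, fun k hk => ?_⟩
  -- cover `k` by the power `n ^ (N + 1)`, where `n ^ N ≤ k`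
  set N := Nat.log n k
  have hkN : k ≤ n ^ (N + 1) := (Nat.lt_pow_succ_log_self hn k).le
  have hNk : ((n ^ N : ℕ) : ℝ) ≤ k := by exact_mod_cast Nat.pow_log_le_self n (by omega)
  have hceil : ⌈(k : ℝ) ^ κ⌉₊ ≤ p ^ (N + 1) := by
    rw [Nat.ceil_le]
    push_cast
    calc (k : ℝ) ^ κ ≤ ((n : ℝ) ^ (N + 1)) ^ κ :=
          rpow_le_rpow (by positivity) (by exact_mod_cast hkN) hκ
      _ = ((n : ℝ) ^ κ) ^ (N + 1) := (rpow_pow_comm (by positivity) _ _).symm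
      _ ≤ (p : ℝ) ^ (N + 1) := pow_le_pow_left₀ (by positivity) hp _
  calc (borderRank (MM F k k ⌈(k : ℝ) ^ κ⌉₊) : ℝ) ≤ (R : ℝ) ^ (N + 1) := by
        exact_mod_cast (borderRank_MM_mono hkN hkN hceil).trans (borderRank_MM_pow_le n n p _)
    _ = R * ((n ^ N : ℕ) : ℝ) ^ logb n R := by
        rw [pow_succ, mul_comm, Nat.cast_pow, ← rpow_pow_comm (by positivity),
          rpow_logb (by positivity) hn1.ne' (by positivity)]
    _ ≤ R * (k : ℝ) ^ logb n R := by gcongr; exact logb_nonneg hn1 hR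

theorem rpow_omegaExp_le_borderRank_MM (hκ : 0 ≤ κ) {n p : ℕ} (hn : 1 ≤ n)
    (hp : (n : ℝ) ^ κ ≤ p) : (n : ℝ) ^ omegaExp F κ ≤ borderRank (MM F n n p) := by
  have hR : (1 : ℝ) ≤ borderRank (MM F n n p) := by exact_mod_cast one_le_borderRank_MM hκ hn hp
  rcases hn.eq_or_lt with rfl | hn2
  · simpa using hR
  have hn1 : (1 : ℝ) < n := by exact_mod_cast hn2
  calc (n : ℝ) ^ omegaExp F κ ≤ n ^ logb n (borderRank (MM F n n p)) :=
        rpow_le_rpow_of_exponent_le hn1.le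
          (csInf_le bddBelow_admissibleExponents (logb_mem_admissibleExponents hκ hn2 hp))
    _ = borderRank (MM F n n p) := rpow_logb (by positivity) hn1.ne' (by positivity)

theorem exists_borderRank_MM_le {τ : ℝ} (hτ : τ ∈ admissibleExponents F κ) (hτ0 : 0 < τ) :
    ∃ C : ℝ, 0 < C ∧ ∀ y : ℝ, 1 ≤ y → ∃ a : ℕ, 1 ≤ a ∧
      (borderRank (MM F a a ⌈(a : ℝ) ^ κ⌉₊) : ℝ) ≤ y ∧ y ≤ C * (a : ℝ) ^ τ := by
  obtain ⟨C, hC⟩ := hτ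
  set C' := max C 1
  have hC' : 0 < C' := lt_max_of_lt_right one_pos
  refine ⟨C' * 2 ^ τ, by positivity, fun y hy => ?_⟩
  set x := (y / C') ^ τ⁻¹
  have hx : C' * x ^ τ = y := by
    rw [rpow_inv_rpow (by positivity) hτ0.ne']
    field_simp
  rcases lt_or_ge x 1 with hx1 | hx1
  · refine ⟨1, le_rfl, ?_, ?_⟩
    · have h1 : ⌈((1 : ℕ) : ℝ) ^ κ⌉₊ = 1 := by simp
      have := borderRank_le (borderDecomp_card_prod (MM F 1 1 1))
      simp only [Fintype.card_prod, Fintype.card_fin] at this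
      rw [h1]
      exact (Nat.cast_le_one.2 this).trans hy
    · calc y = C' * x ^ τ := hx.symm
        _ ≤ C' * 1 := by gcongr; exact rpow_le_one (by positivity) hx1.le hτ0.le
        _ ≤ C' * 2 ^ τ * (1 : ℕ) ^ τ := by
          rw [Nat.cast_one, one_rpow, mul_one, mul_one]
          exact le_mul_of_one_le_right hC'.le (one_le_rpow one_le_two hτ0.le)
  · have ha : 1 ≤ ⌊x⌋₊ := Nat.le_floor (by exact_mod_cast hx1)
    have ha' : (1 : ℝ) ≤ ⌊x⌋₊ := by exact_mod_cast ha
    refine ⟨⌊x⌋₊, ha, ?_, ?_⟩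
    · calc (borderRank (MM F ⌊x⌋₊ ⌊x⌋₊ ⌈(⌊x⌋₊ : ℝ) ^ κ⌉₊) : ℝ) ≤ C * (⌊x⌋₊ : ℝ) ^ τ := hC _ ha
        _ ≤ C' * x ^ τ := by
          gcongr
          · exact le_max_left _ _
          · exact Nat.floor_le (by positivity)
        _ = y := hx
    · calc y = C' * x ^ τ := hx.symm
        _ ≤ C' * (2 * ⌊x⌋₊) ^ τ := by gcongr; linarith [Nat.lt_floor_add_one x]
        _ = C' * 2 ^ τ * (⌊x⌋₊ : ℝ) ^ τ := by rw [mul_rpow (by norm_num) (by positivity)]; ring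

theorem rpow_div_mul_rpow_omegaExp_le (hκ : 0 ≤ κ) {R r m p : ℕ} (hr : 1 ≤ r) (hm : 1 ≤ m)
    (hp : (m : ℝ) ^ κ ≤ p) (h : BorderDecomp (tmul (unitTensor F r) (MM F m m p)) R)
    {τ : ℝ} (hτ : τ ∈ admissibleExponents F κ) :
    (r : ℝ) ^ (omegaExp F κ / τ) * (m : ℝ) ^ omegaExp F κ ≤ R := by
  set ω := omegaExp F κ
  have hτ0 : 0 < τ := by linarith [two_le_of_mem_admissibleExponents hτ]
  have hω : 0 ≤ ω := by linarith [two_le_omegaExp (F := F) hκ]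
  obtain ⟨C, hC, hCa⟩ := exists_borderRank_MM_le hτ hτ0
  refine le_of_forall_pow_le_mul_pow (by positivity) (K := C ^ (ω / τ))
    fun N => ?_
  obtain ⟨a, ha, hab, hra⟩ := hCa (r ^ N) (one_le_pow₀ (by exact_mod_cast hr))
  have hpow := borderRank_le (borderDecomp_MM_mul_pow h
    ((borderDecomp_borderRank _).mono (by exact_mod_cast hab)))
  have hexp : ((a * m ^ N : ℕ) : ℝ) ^ κ ≤ (⌈(a : ℝ) ^ κ⌉₊ * p ^ N : ℕ) := by
    push_cast
    rw [mul_rpow (by positivity) (by positivity), ← rpow_pow_comm (by positivity)]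
    gcongr
    exact Nat.le_ceil _
  have hlow := rpow_omegaExp_le_borderRank_MM (F := F) hκ
    (Nat.one_le_iff_ne_zero.2 (by positivity)) hexp
  calc ((r : ℝ) ^ (ω / τ) * (m : ℝ) ^ ω) ^ N = ((r : ℝ) ^ N) ^ (ω / τ) * ((m : ℝ) ^ N) ^ ω := by
        rw [mul_pow, rpow_pow_comm (by positivity), rpow_pow_comm (by positivity)]
    _ ≤ (C * (a : ℝ) ^ τ) ^ (ω / τ) * ((m : ℝ) ^ N) ^ ω := by gcongr
    _ = C ^ (ω / τ) * ((a * m ^ N : ℕ) : ℝ) ^ ω := by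
        rw [mul_rpow hC.le (by positivity), ← rpow_mul (by positivity), mul_div_cancel₀ _ hτ0.ne',
          Nat.cast_mul, Nat.cast_pow, mul_rpow (by positivity) (by positivity)]
        ring
    _ ≤ C ^ (ω / τ) * (R : ℝ) ^ N := by
        gcongr
        exact hlow.trans (by exact_mod_cast hpow)

theorem natCast_mul_rpow_omegaExp_le (hκ : 0 ≤ κ) {R r m p : ℕ} (hp : (m : ℝ) ^ κ ≤ p)
    (h : BorderDecomp (tmul (unitTensor F r) (MM F m m p)) R) :
    (r : ℝ) * (m : ℝ) ^ omegaExp F κ ≤ R := by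
  set ω := omegaExp F κ
  have hω : 0 < ω := by linarith [two_le_omegaExp (F := F) hκ]
  rcases Nat.eq_zero_or_pos r with rfl | hr
  · simp
  rcases Nat.eq_zero_or_pos m with rfl | hm
  · simp [zero_rpow hω.ne']
  have hne : (𝓝[admissibleExponents F κ] ω).NeBot := mem_closure_iff_nhdsWithin_neBot.1
    (csInf_mem_closure ⟨_, three_add_mem_admissibleExponents hκ⟩ bddBelow_admissibleExponents)
  have hlim : Tendsto (fun τ => (r : ℝ) ^ (ω / τ) * (m : ℝ) ^ ω)
      (𝓝[admissibleExponents F κ] ω) (𝓝 ((r : ℝ) ^ (ω / ω) * (m : ℝ) ^ ω)) :=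
    ((continuousAt_const.rpow (continuousAt_const.div continuousAt_id hω.ne')
      (Or.inl (by positivity))).mul continuousAt_const).tendsto.mono_left nhdsWithin_le_nhds
  rw [div_self hω.ne', rpow_one] at hlim
  exact le_of_tendsto (hx := hne) hlim (eventually_nhdsWithin_of_forall fun τ hτ =>
    rpow_div_mul_rpow_omegaExp_le hκ hr hm hp h hτ)

end Exponent

theorem stmt8_general {F : Type*} [Field F] {ι₁ ι₂ ι₃ : Type*}
    [Fintype ι₁] [Fintype ι₂] [Fintype ι₃]
    [DecidableEq ι₁] [DecidableEq ι₂] [DecidableEq ι₃]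
    (t : Tensor F ι₁ ι₂ ι₃) (κ : ℝ) (hκ : 0 ≤ κ) (r m : ℕ)
    (Sx : Fin r → Finset ι₁) (Sy : Fin r → Finset ι₂) (Sz : Fin r → Finset ι₃)
    (hcross : ∀ l l' l'' : Fin r, ¬(l = l' ∧ l' = l'') →
      ∀ i ∈ Sx l, ∀ j ∈ Sy l', ∀ k ∈ Sz l'', t i j k = 0)
    (P : Fin r → ℕ) (hP : ∀ l, ((m : ℝ)) ^ κ ≤ (P l : ℝ))
    (hiso : ∀ l, TIso (fun (i : ↥(Sx l)) (j : ↥(Sy l)) (k : ↥(Sz l)) =>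
      t (i : ι₁) (j : ι₂) (k : ι₃)) (MM F m m (P l))) :
    (r : ℝ) * (m : ℝ) ^ (omegaExp F κ) ≤ (borderRank t : ℝ) := by
  have hdeg := degeneratesTo_tmul_MM_of_blocks t Sx Sy Sz hcross hiso
    fun l => Nat.ceil_le.2 (hP l)
  exact natCast_mul_rpow_omegaExp_le hκ (Nat.le_ceil _)
    (hdeg.borderDecomp (borderDecomp_borderRank t))

/-- Schönhage's asymptotic sum inequality (rectangular version): if `t` can be
converted, by zeroing out variables, into a direct sum of `r` pairwise
variable-disjoint terms, each isomorphic to `⟨m,m,P_l⟩` with `P_l ≥ m^κ`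
(i.e. `⟨m,m,m^{s_l}⟩` with `s_l ≥ κ`), then `r · m^{ω(κ)} ≤ R̲(t)`. -/
theorem stmt8 {F : Type*} [Field F] {ι₁ ι₂ ι₃ : Type*}
    [Fintype ι₁] [Fintype ι₂] [Fintype ι₃]
    [DecidableEq ι₁] [DecidableEq ι₂] [DecidableEq ι₃]
    (t : Tensor F ι₁ ι₂ ι₃) (κ : ℝ) (hκ : 0 ≤ κ) (r m : ℕ)
    (Sx : Fin r → Finset ι₁) (Sy : Fin r → Finset ι₂) (Sz : Fin r → Finset ι₃)
    (hdx : ∀ l l', l ≠ l' → Disjoint (Sx l) (Sx l'))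
    (hdy : ∀ l l', l ≠ l' → Disjoint (Sy l) (Sy l'))
    (hdz : ∀ l l', l ≠ l' → Disjoint (Sz l) (Sz l'))
    (hcross : ∀ l l' l'' : Fin r, ¬(l = l' ∧ l' = l'') →
      ∀ i ∈ Sx l, ∀ j ∈ Sy l', ∀ k ∈ Sz l'', t i j k = 0)
    (P : Fin r → ℕ) (hP : ∀ l, ((m : ℝ)) ^ κ ≤ (P l : ℝ))
    (hiso : ∀ l, TIso (fun (i : ↥(Sx l)) (j : ↥(Sy l)) (k : ↥(Sz l)) =>
      t (i : ι₁) (j : ι₂) (k : ι₃)) (MM F m m (P l))) :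
    (r : ℝ) * (m : ℝ) ^ (omegaExp F κ) ≤ (borderRank t : ℝ) :=
  stmt8_general t κ hκ r m Sx Sy Sz hcross P hP hiso
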